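/- Let f : ℝ^d → ℝ be smooth with f(x) → +∞ as ‖x‖ → +∞, let γ ≥ 0 and c ≥ 0, and let (x, p) be a solution of the CD dynamics on [0, ∞). Then there exists R > 0 such that ‖x(t)‖ ≤ R and ‖p(t)‖ ≤ R for all t ≥ 0. Moreover, the function 𝒢(t) = f(x(t)) − f(x*) + (1/2)‖p(t)‖², where f(x*) is the minimum value of f, satisfies 𝒢'(t) = −γ‖p(t)‖² − c·⟨p(t), [p(t)]³⟩ ≤ 0 for all t ≥ 0. -/

import Mathlib

open Filter RealInnerProductSpace

/-- Componentwise cube of a vector in `ℝ^d`. -/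
noncomputable def cwCube {d : ℕ} (a : EuclideanSpace ℝ (Fin d)) :
    EuclideanSpace ℝ (Fin d) := WithLp.toLp 2 (fun i => a i ^ 3)

lemma inner_cwCube_nonneg {d : ℕ} (a : EuclideanSpace ℝ (Fin d)) :
    0 ≤ ⟪a, cwCube a⟫ := by
  rw [PiLp.inner_apply]
  apply Finset.sum_nonneg
  intro i _
  simp only [RCLike.inner_apply, conj_trivial, cwCube, PiLp.toLp_apply]
  nlinarith [sq_nonneg (a i), sq_nonneg (a i ^ 2)]

/-- Solutions of the CD dynamics `ẋ = p`, `ṗ = -∇f(x) - γp - c[p]³` remain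
bounded for all positive times when `f` is smooth and coercive, and the energy
`𝒢(t) = f(x(t)) - f(x*) + ½‖p(t)‖²` has derivative
`-γ‖p(t)‖² - c⟨p(t), [p(t)]³⟩ ≤ 0`. -/
theorem cd_solutions_bounded_and_energy_decreasing
    (d : ℕ) (f : EuclideanSpace ℝ (Fin d) → ℝ)
    (hf : ContDiff ℝ (⊤ : ℕ∞) f)
    (hcoercive : Tendsto f (Filter.comap (fun x => ‖x‖) atTop) atTop)
    (xstar : EuclideanSpace ℝ (Fin d)) (hmin : ∀ y, f xstar ≤ f y)
    (γ c : ℝ) (hγ : 0 ≤ γ) (hc : 0 ≤ c)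
    (x p : ℝ → EuclideanSpace ℝ (Fin d))
    (hx : ∀ t, 0 ≤ t → HasDerivAt x (p t) t)
    (hp : ∀ t, 0 ≤ t → HasDerivAt p
      (-gradient f (x t) - γ • p t - c • cwCube (p t)) t) :
    (∃ R : ℝ, 0 < R ∧ ∀ t : ℝ, 0 ≤ t → ‖x t‖ ≤ R ∧ ‖p t‖ ≤ R) ∧
    (∀ t : ℝ, 0 ≤ t →
      HasDerivAt (fun s => f (x s) - f xstar + (1 / 2) * ‖p s‖ ^ 2)
        (-γ * ‖p t‖ ^ 2 - c * ⟪p t, cwCube (p t)⟫) t ∧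
      -γ * ‖p t‖ ^ 2 - c * ⟪p t, cwCube (p t)⟫ ≤ 0) := by
  set G : ℝ → ℝ := fun s => f (x s) - f xstar + (1 / 2) * ‖p s‖ ^ 2 with hG
  set G' : ℝ → ℝ := fun t => -γ * ‖p t‖ ^ 2 - c * ⟪p t, cwCube (p t)⟫ with hG'
  have hderiv : ∀ t, 0 ≤ t → HasDerivAt G (G' t) t := by
    intro t ht
    have hgrad : HasGradientAt f (gradient f (x t)) (x t) :=
      (hf.differentiable (by simp) (x t)).hasGradientAt
    have h1 : HasDerivAt (fun s => f (x s)) ⟪gradient f (x t), p t⟫ t := by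
      have := hgrad.hasFDerivAt.comp_hasDerivAt t (hx t ht)
      simp [InnerProductSpace.toDual_apply_apply] at this ⊢
      exact this
    have h2 : HasDerivAt (fun s => ⟪p s, p s⟫)
        (⟪p t, -gradient f (x t) - γ • p t - c • cwCube (p t)⟫ +
         ⟪-gradient f (x t) - γ • p t - c • cwCube (p t), p t⟫) t :=
      HasDerivAt.inner ℝ (hp t ht) (hp t ht)
    have h3 : HasDerivAt G (⟪gradient f (x t), p t⟫ + (1 / 2) *
        (⟪p t, -gradient f (x t) - γ • p t - c • cwCube (p t)⟫ +
         ⟪-gradient f (x t) - γ • p t - c • cwCube (p t), p t⟫)) t := by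
      have : G = fun s => (f (x s) - f xstar) + (1 / 2) * ⟪p s, p s⟫ := by
        funext s; simp only [hG, real_inner_self_eq_norm_sq]
      rw [this]
      exact ((h1.sub_const (f xstar)).add ((h2.const_mul (1 / 2))))
    convert h3 using 1
    simp only [hG', inner_sub_right, inner_sub_left, inner_neg_right, inner_neg_left,
      real_inner_smul_right, real_inner_smul_left, real_inner_self_eq_norm_sq,
      real_inner_comm (p t) (gradient f (x t)), real_inner_comm (p t) (cwCube (p t))]
    ring
  have hnonpos : ∀ t, G' t ≤ 0 := by
    intro t
    have h1 : 0 ≤ γ * ‖p t‖ ^ 2 := by positivity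
    have h2 : 0 ≤ c * ⟪p t, cwCube (p t)⟫ :=
      mul_nonneg hc (inner_cwCube_nonneg _)
    simp only [hG']; linarith
  refine ⟨?_, fun t ht => ⟨hderiv t ht, hnonpos t⟩⟩
  clear_value G G'
  -- boundedness
  have hanti : AntitoneOn G (Set.Ici 0) := by
    apply antitoneOn_of_deriv_nonpos (convex_Ici 0)
    · intro t ht
      exact (hderiv t ht).continuousAt.continuousWithinAt
    · intro t ht
      rw [interior_Ici] at ht
      exact (hderiv t (le_of_lt ht)).differentiableAt.differentiableWithinAt
    · intro t ht
      rw [interior_Ici] at ht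
      rw [(hderiv t (le_of_lt ht)).deriv]
      exact hnonpos t
  have hG0 : ∀ t, 0 ≤ t → G t ≤ G 0 := fun t ht =>
    hanti Set.self_mem_Ici ht ht
  have hGnn : 0 ≤ G 0 := by
    simp only [hG]
    nlinarith [hmin (x 0), sq_nonneg ‖p 0‖]
  -- p bound
  have hpbd : ∀ t, 0 ≤ t → ‖p t‖ ≤ Real.sqrt (2 * G 0) := by
    intro t ht
    have h1 : ‖p t‖ ^ 2 ≤ 2 * G 0 := by
      have h3 : (1/2) * ‖p t‖ ^ 2 ≤ G t := by
        simp only [hG]; nlinarith [hmin (x t)]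
      linarith [hG0 t ht]
    calc ‖p t‖ = Real.sqrt (‖p t‖ ^ 2) := by
          rw [Real.sqrt_sq (norm_nonneg _)]
      _ ≤ Real.sqrt (2 * G 0) := Real.sqrt_le_sqrt h1
  -- x bound via coercivity
  have hflevel : ∀ t, 0 ≤ t → f (x t) ≤ G 0 + f xstar := by
    intro t ht
    have h3 : f (x t) - f xstar ≤ G t := by
      simp only [hG]; nlinarith [sq_nonneg ‖p t‖]
    linarith [hG0 t ht]
  obtain ⟨B, hB⟩ : ∃ B : ℝ, ∀ v : EuclideanSpace ℝ (Fin d),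
      B ≤ ‖v‖ → G 0 + f xstar + 1 ≤ f v := by
    have hev := hcoercive.eventually (eventually_ge_atTop (G 0 + f xstar + 1))
    rw [Filter.eventually_comap] at hev
    rw [Filter.eventually_atTop] at hev
    obtain ⟨B, hB⟩ := hev
    exact ⟨B, fun v hv => hB ‖v‖ hv v rfl⟩
  have hxbd : ∀ t, 0 ≤ t → ‖x t‖ ≤ max B 0 := by
    intro t ht
    by_contra h
    push_neg at h
    have h1 : B ≤ ‖x t‖ := le_of_lt (lt_of_le_of_lt (le_max_left B 0) h)
    have := hB (x t) h1
    have := hflevel t ht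
    linarith
  refine ⟨max (max B 0) (Real.sqrt (2 * G 0)) + 1, by positivity, fun t ht => ⟨?_, ?_⟩⟩
  · calc ‖x t‖ ≤ max B 0 := hxbd t ht
      _ ≤ max (max B 0) (Real.sqrt (2 * G 0)) + 1 := by
          have := le_max_left (max B 0) (Real.sqrt (2 * G 0)); linarith
  · calc ‖p t‖ ≤ Real.sqrt (2 * G 0) := hpbd t ht
      _ ≤ max (max B 0) (Real.sqrt (2 * G 0)) + 1 := by
          have := le_max_right (max B 0) (Real.sqrt (2 * G 0)); linarith
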